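/- Let F be an algebraically closed field, f(ξ) ∈ F[ξ] a nonzero polynomial of degree n > 1 with zero constant term, and c an element of the split octonion algebra O over F. If there exist γ₁ ≠ γ₂ in F and an F-algebra automorphism g of O with g(c) = γ₁·e₁ + γ₂·e₂, then the set X = {x ∈ O : f(x) = c} is nonempty and has at most n² elements. -/

import Mathlib

noncomputable section

/-- The split octonion algebra over `F`, given by Zorn vector matrices
`(x1, u; v, x2)` with `x1, x2 ∈ F` and `u, v ∈ F³`. -/
@[ext]
structure SplitOctonion (F : Type*) where
  x1 : F
  u : Fin 3 → F
  v : Fin 3 → F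
  x2 : F

namespace SplitOctonion

variable {F : Type*} [Field F]

/-- Dot product on `F³`. -/
def dot (x y : Fin 3 → F) : F := x 0 * y 0 + x 1 * y 1 + x 2 * y 2

/-- Cross product on `F³`. -/
def cross (x y : Fin 3 → F) : Fin 3 → F :=
  ![x 1 * y 2 - x 2 * y 1, x 2 * y 0 - x 0 * y 2, x 0 * y 1 - x 1 * y 0]

instance : Zero (SplitOctonion F) := ⟨⟨0, 0, 0, 0⟩⟩
instance : One (SplitOctonion F) := ⟨⟨1, 0, 0, 1⟩⟩
instance : Add (SplitOctonion F) :=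
  ⟨fun x y => ⟨x.x1 + y.x1, x.u + y.u, x.v + y.v, x.x2 + y.x2⟩⟩
instance : Neg (SplitOctonion F) := ⟨fun x => ⟨-x.x1, -x.u, -x.v, -x.x2⟩⟩
instance : SMul F (SplitOctonion F) :=
  ⟨fun c x => ⟨c * x.x1, c • x.u, c • x.v, c * x.x2⟩⟩

/-- Zorn vector matrix multiplication. -/
instance : Mul (SplitOctonion F) :=
  ⟨fun x y => ⟨x.x1 * y.x1 + dot x.u y.v,
    x.x1 • y.u + y.x2 • x.u - cross x.v y.v,
    y.x1 • x.v + x.x2 • y.v + cross x.u y.u,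
    x.x2 * y.x2 + dot x.v y.u⟩⟩

@[simp] lemma zero_x1 : (0 : SplitOctonion F).x1 = 0 := rfl
@[simp] lemma zero_u : (0 : SplitOctonion F).u = 0 := rfl
@[simp] lemma zero_v : (0 : SplitOctonion F).v = 0 := rfl
@[simp] lemma zero_x2 : (0 : SplitOctonion F).x2 = 0 := rfl
@[simp] lemma add_x1 (x y : SplitOctonion F) : (x + y).x1 = x.x1 + y.x1 := rfl
@[simp] lemma add_u (x y : SplitOctonion F) : (x + y).u = x.u + y.u := rfl
@[simp] lemma add_v (x y : SplitOctonion F) : (x + y).v = x.v + y.v := rfl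
@[simp] lemma add_x2 (x y : SplitOctonion F) : (x + y).x2 = x.x2 + y.x2 := rfl
@[simp] lemma neg_x1 (x : SplitOctonion F) : (-x).x1 = -x.x1 := rfl
@[simp] lemma neg_u (x : SplitOctonion F) : (-x).u = -x.u := rfl
@[simp] lemma neg_v (x : SplitOctonion F) : (-x).v = -x.v := rfl
@[simp] lemma neg_x2 (x : SplitOctonion F) : (-x).x2 = -x.x2 := rfl
@[simp] lemma smul_x1 (c : F) (x : SplitOctonion F) : (c • x).x1 = c * x.x1 := rfl
@[simp] lemma smul_u (c : F) (x : SplitOctonion F) : (c • x).u = c • x.u := rfl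
@[simp] lemma smul_v (c : F) (x : SplitOctonion F) : (c • x).v = c • x.v := rfl
@[simp] lemma smul_x2 (c : F) (x : SplitOctonion F) : (c • x).x2 = c * x.x2 := rfl

instance : AddCommGroup (SplitOctonion F) where
  add_assoc x y z := by ext <;> simp [add_assoc]
  zero_add x := by ext <;> simp
  add_zero x := by ext <;> simp
  add_comm x y := by ext <;> simp [add_comm]
  neg_add_cancel x := by ext <;> simp
  nsmul := nsmulRec
  zsmul := zsmulRec

instance : Module F (SplitOctonion F) where
  one_smul x := by ext <;> simp
  mul_smul c d x := by ext <;> simp [mul_assoc, mul_smul]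
  smul_zero c := by ext <;> simp
  smul_add c x y := by ext <;> simp [mul_add, smul_add]
  add_smul c d x := by ext <;> simp [add_mul, add_smul]
  zero_smul x := by ext <;> simp

/-- Powers of a single octonion (well defined by power-associativity). -/
def npow (x : SplitOctonion F) : ℕ → SplitOctonion F
  | 0 => 1
  | n + 1 => npow x n * x

instance : Pow (SplitOctonion F) ℕ := ⟨npow⟩

/-- Substitution of an octonion into a polynomial over `F`:
`f(x) = αₙ xⁿ + ⋯ + α₁ x + α₀ • 1`. -/
def peval (f : Polynomial F) (x : SplitOctonion F) : SplitOctonion F :=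
  f.sum fun i c => c • x ^ i

/-- The octonion `e₁`. -/
def e1 : SplitOctonion F := ⟨1, 0, 0, 0⟩
/-- The octonion `e₂`. -/
def e2 : SplitOctonion F := ⟨0, 0, 0, 1⟩
/-- The octonion `u₁`. -/
def u1 : SplitOctonion F := ⟨0, ![1, 0, 0], 0, 0⟩

/-- Conjugation on `O`. -/
def conj (x : SplitOctonion F) : SplitOctonion F := ⟨x.x2, -x.u, -x.v, x.x1⟩

/-- The norm of an octonion. -/
def normO (x : SplitOctonion F) : F := x.x1 * x.x2 - dot x.u x.v

/-- The trace of an octonion. -/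
def trO (x : SplitOctonion F) : F := x.x1 + x.x2

/-- `g` is an `F`-algebra automorphism of `O`: a linear bijection preserving
multiplication (and the unit). -/
def IsAlgAut (g : SplitOctonion F ≃ₗ[F] SplitOctonion F) : Prop :=
  g 1 = 1 ∧ ∀ x y, g (x * y) = g x * g y

end SplitOctonion

/-! Every value `f(x)` lies in the span of `x` and `1`, because each octonion satisfies the
quadratic equation `x² = tr(x) x - N(x) 1`. So if `f(y)` is the diagonal octonion
`γ₁ e₁ + γ₂ e₂` with `γ₁ ≠ γ₂`, the coefficient of `y` is nonzero and `y` is itself diagonal,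
`y = λ₁ e₁ + λ₂ e₂` with `f(λ₁) = γ₁` and `f(λ₂) = γ₂`. The solutions of `f(x) = c` are thus
in bijection, through the automorphism `g`, with pairs of roots of `f - γ₁` and `f - γ₂`: there
is at least one such pair since `F` is algebraically closed, and at most `n²`. -/

namespace Polynomial

variable {R : Type*} [CommRing R] [IsDomain R] {p : R[X]}

lemma preimage_eval_singleton_eq_roots [DecidableEq R] (hp : 0 < p.degree) (a : R) :
    (fun x => p.eval x) ⁻¹' {a} = ((p - C a).roots.toFinset : Set R) := by
  ext x
  simp [mem_roots_sub_C hp]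

lemma finite_preimage_eval_singleton (hp : 0 < p.degree) (a : R) :
    ((fun x => p.eval x) ⁻¹' {a}).Finite := by
  classical
  rw [preimage_eval_singleton_eq_roots hp]
  exact Finset.finite_toSet _

lemma ncard_preimage_eval_singleton_le (hp : 0 < p.degree) (a : R) :
    ((fun x => p.eval x) ⁻¹' {a}).ncard ≤ p.natDegree := by
  classical
  rw [preimage_eval_singleton_eq_roots hp, Set.ncard_coe_finset]
  exact (Multiset.toFinset_card_le _).trans (card_roots_sub_C' hp)

end Polynomial

namespace SplitOctonion

variable {F : Type*} [Field F]

@[simp] lemma mul_x1 (x y : SplitOctonion F) : (x * y).x1 = x.x1 * y.x1 + dot x.u y.v := rfl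
@[simp] lemma mul_u (x y : SplitOctonion F) :
    (x * y).u = x.x1 • y.u + y.x2 • x.u - cross x.v y.v := rfl
@[simp] lemma mul_v (x y : SplitOctonion F) :
    (x * y).v = y.x1 • x.v + x.x2 • y.v + cross x.u y.u := rfl
@[simp] lemma mul_x2 (x y : SplitOctonion F) : (x * y).x2 = x.x2 * y.x2 + dot x.v y.u := rfl

@[simp] lemma one_x1 : (1 : SplitOctonion F).x1 = 1 := rfl
@[simp] lemma one_u : (1 : SplitOctonion F).u = 0 := rfl
@[simp] lemma one_v : (1 : SplitOctonion F).v = 0 := rfl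
@[simp] lemma one_x2 : (1 : SplitOctonion F).x2 = 1 := rfl

protected lemma pow_zero (x : SplitOctonion F) : x ^ 0 = 1 := rfl
protected lemma pow_succ (x : SplitOctonion F) (k : ℕ) : x ^ (k + 1) = x ^ k * x := rfl

@[simp] lemma dot_zero_left (w : Fin 3 → F) : dot 0 w = 0 := by simp [dot]
@[simp] lemma cross_zero_left (w : Fin 3 → F) : cross 0 w = 0 := by
  ext i
  fin_cases i <;> simp [cross]

lemma smul_add_smul_one_mul (a b : F) (x : SplitOctonion F) :
    (a • x + b • 1) * x = (a * trO x + b) • x + (-(a * normO x)) • 1 := by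
  ext i <;> (try fin_cases i) <;> simp [trO, normO, dot, cross] <;> ring

lemma pow_mem_span (x : SplitOctonion F) (k : ℕ) :
    x ^ k ∈ Submodule.span F {x, 1} := by
  induction k with
  | zero => exact Submodule.subset_span (Set.mem_insert_of_mem _ rfl)
  | succ k ih =>
    obtain ⟨a, b, hab⟩ := Submodule.mem_span_pair.1 ih
    rw [SplitOctonion.pow_succ, ← hab, smul_add_smul_one_mul]
    exact Submodule.add_mem _ (Submodule.smul_mem _ _ (Submodule.subset_span (.inl rfl)))
      (Submodule.smul_mem _ _ (Submodule.subset_span (.inr rfl)))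

lemma peval_mem_span (f : Polynomial F) (x : SplitOctonion F) :
    peval f x ∈ Submodule.span F {x, 1} :=
  Submodule.sum_mem _ fun i _ => Submodule.smul_mem _ _ (pow_mem_span x i)

def diagonal : F × F →ₗ[F] SplitOctonion F where
  toFun p := ⟨p.1, 0, 0, p.2⟩
  map_add' _ _ := by ext <;> simp
  map_smul' _ _ := by ext <;> simp

@[simp] lemma diagonal_x1 (p : F × F) : (diagonal p).x1 = p.1 := rfl
@[simp] lemma diagonal_u (p : F × F) : (diagonal p).u = 0 := rfl
@[simp] lemma diagonal_v (p : F × F) : (diagonal p).v = 0 := rfl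
@[simp] lemma diagonal_x2 (p : F × F) : (diagonal p).x2 = p.2 := rfl

lemma diagonal_injective : Function.Injective (diagonal : F × F → SplitOctonion F) :=
  fun _ _ h => Prod.ext (congrArg x1 h) (congrArg x2 h)

lemma smul_e1_add_smul_e2 (a b : F) : a • (e1 : SplitOctonion F) + b • e2 = diagonal (a, b) := by
  ext <;> simp [e1, e2]

lemma diagonal_pow (p : F × F) (k : ℕ) : diagonal p ^ k = diagonal (p ^ k) := by
  induction k with
  | zero => ext <;> simp [SplitOctonion.pow_zero]
  | succ k ih => ext <;> simp [SplitOctonion.pow_succ, ih, pow_succ]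

lemma peval_diagonal (f : Polynomial F) (p : F × F) :
    peval f (diagonal p) = diagonal (f.eval p.1, f.eval p.2) := by
  simp only [peval, Polynomial.sum_def, diagonal_pow, ← map_smul, ← map_sum]
  congr 1
  ext <;> simp [Polynomial.eval_eq_sum, Polynomial.sum_def, Prod.fst_sum, Prod.snd_sum]

lemma eq_diagonal_of_peval_eq_diagonal {f : Polynomial F} {y : SplitOctonion F} {γ : F × F}
    (hγ : γ.1 ≠ γ.2) (hy : peval f y = diagonal γ) : y = diagonal (y.x1, y.x2) := by
  obtain ⟨a, b, hab⟩ := Submodule.mem_span_pair.1 (peval_mem_span f y)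
  rw [hy] at hab
  have ha : a ≠ 0 := by
    rintro rfl
    have h₁ := congrArg x1 hab
    have h₂ := congrArg x2 hab
    simp only [add_x1, add_x2, smul_x1, smul_x2, zero_mul, zero_add, one_x1, one_x2,
      diagonal_x1, diagonal_x2] at h₁ h₂
    exact hγ (h₁.symm.trans h₂)
  have hu : a • y.u = 0 := by simpa using congrArg u hab
  have hv : a • y.v = 0 := by simpa using congrArg v hab
  ext <;> simp [(smul_eq_zero.1 hu).resolve_left ha, (smul_eq_zero.1 hv).resolve_left ha]

lemma setOf_peval_eq_diagonal (f : Polynomial F) {γ : F × F} (hγ : γ.1 ≠ γ.2) :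
    {y | peval f y = diagonal γ} =
      diagonal '' (((fun l => f.eval l) ⁻¹' {γ.1}) ×ˢ ((fun l => f.eval l) ⁻¹' {γ.2})) := by
  ext y
  constructor
  · intro (hy : peval f y = diagonal γ)
    have hdiag := eq_diagonal_of_peval_eq_diagonal hγ hy
    rw [hdiag, peval_diagonal] at hy
    exact ⟨(y.x1, y.x2), Prod.ext_iff.1 (diagonal_injective hy), hdiag.symm⟩
  · rintro ⟨p, ⟨hp₁, hp₂⟩, rfl⟩
    exact (peval_diagonal f p).trans (congrArg diagonal (Prod.ext hp₁ hp₂))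

namespace IsAlgAut

variable {g : SplitOctonion F ≃ₗ[F] SplitOctonion F}

lemma map_pow (hg : IsAlgAut g) (x : SplitOctonion F) (k : ℕ) : g (x ^ k) = g x ^ k := by
  induction k with
  | zero => exact hg.1
  | succ k ih => rw [SplitOctonion.pow_succ, SplitOctonion.pow_succ, hg.2, ih]

lemma map_peval (hg : IsAlgAut g) (f : Polynomial F) (x : SplitOctonion F) :
    g (peval f x) = peval f (g x) := by
  simp only [peval, Polynomial.sum_def, map_sum, map_smul, hg.map_pow]

lemma setOf_peval_eq (hg : IsAlgAut g) (f : Polynomial F) (c : SplitOctonion F) :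
    {x | peval f x = c} = g.symm '' {y | peval f y = g c} := by
  ext x
  rw [LinearEquiv.image_symm_eq_preimage, Set.mem_preimage, Set.mem_ofPred_eq, Set.mem_ofPred_eq,
    ← hg.map_peval, g.injective.eq_iff]

end IsAlgAut

end SplitOctonion

open SplitOctonion Polynomial in
theorem solutions_nonempty_and_card_le_of_conjugate_diag_general {F : Type*} [Field F] [IsAlgClosed F]
    (f : Polynomial F) (hdeg : 1 < f.natDegree)
    (c : SplitOctonion F)
    (hc : ∃ γ₁ γ₂ : F, γ₁ ≠ γ₂ ∧ ∃ g : SplitOctonion F ≃ₗ[F] SplitOctonion F, IsAlgAut g ∧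
      g c = γ₁ • (e1 : SplitOctonion F) + γ₂ • e2) :
    {x : SplitOctonion F | peval f x = c}.Nonempty ∧
      {x : SplitOctonion F | peval f x = c}.Finite ∧
      {x : SplitOctonion F | peval f x = c}.ncard ≤ f.natDegree ^ 2 := by
  obtain ⟨γ₁, γ₂, hγ, g, hg, hgc⟩ := hc
  have hpos : 0 < f.degree := natDegree_pos_iff_degree_pos.1 (by omega)
  have hsurj : Function.Surjective fun l => f.eval l := IsAlgClosed.eval_surjective (by omega)
  rw [hg.setOf_peval_eq, hgc, smul_e1_add_smul_e2, setOf_peval_eq_diagonal f hγ, ← Set.image_comp]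
  have hinj : Function.Injective (g.symm ∘ diagonal) := g.symm.injective.comp diagonal_injective
  rw [Set.ncard_image_of_injective _ hinj, Set.ncard_prod, sq]
  refine ⟨?_, ?_, Nat.mul_le_mul (ncard_preimage_eval_singleton_le hpos _)
    (ncard_preimage_eval_singleton_le hpos _)⟩
  · exact ((hsurj.nonempty_preimage.2 (Set.singleton_nonempty γ₁)).prod
      (hsurj.nonempty_preimage.2 (Set.singleton_nonempty γ₂))).image _
  · exact ((finite_preimage_eval_singleton hpos _).prod
      (finite_preimage_eval_singleton hpos _)).image _

open SplitOctonion Polynomial in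
/-- if `c` is conjugate to `γ₁·e₁ + γ₂·e₂` with `γ₁ ≠ γ₂`, then
`f(x) = c` has at least one and at most `n²` solutions. -/
theorem solutions_nonempty_and_card_le_of_conjugate_diag {F : Type*} [Field F] [IsAlgClosed F]
    (f : Polynomial F) (hf : f ≠ 0) (hdeg : 1 < f.natDegree) (hf0 : f.coeff 0 = 0)
    (c : SplitOctonion F)
    (hc : ∃ γ₁ γ₂ : F, γ₁ ≠ γ₂ ∧ ∃ g : SplitOctonion F ≃ₗ[F] SplitOctonion F, IsAlgAut g ∧
      g c = γ₁ • (e1 : SplitOctonion F) + γ₂ • e2) :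
    {x : SplitOctonion F | peval f x = c}.Nonempty ∧
      {x : SplitOctonion F | peval f x = c}.Finite ∧
      {x : SplitOctonion F | peval f x = c}.ncard ≤ f.natDegree ^ 2 :=
  solutions_nonempty_and_card_le_of_conjugate_diag_general f hdeg c hc
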